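/- Let T be a singular weighted tree with adjacency matrix A. Then A and A# have the same zero–nonzero pattern if and only if T is a weighted star. -/

import Mathlib

open SimpleGraph

/-- `X` is the group inverse of `A`. -/
def IsGroupInverse {n : Type*} [Fintype n] (A X : Matrix n n ℝ) : Prop :=
  A * X * A = A ∧ X * A * X = X ∧ A * X = X * A

/-- A matching of a graph: a set of pairwise non-incident edges. -/
def IsMatching {V : Type*} (G : SimpleGraph V) (M : Finset (Sym2 V)) : Prop :=
  (↑M : Set (Sym2 V)) ⊆ G.edgeSet ∧
    ∀ e ∈ M, ∀ f ∈ M, e ≠ f → ∀ v : V, ¬(v ∈ e ∧ v ∈ f)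

/-- A maximum matching: a matching of maximum cardinality. -/
def IsMaxMatching {V : Type*} (G : SimpleGraph V) (M : Finset (Sym2 V)) : Prop :=
  IsMatching G M ∧ ∀ N : Finset (Sym2 V), IsMatching G N → N.card ≤ M.card

/-- A nonempty list of edges alternately in and out of `M`,
beginning and ending with edges of `M`. -/
def IsAltEdgeList {V : Type*} (M : Set (Sym2 V)) : List (Sym2 V) → Prop
  | [] => False
  | [e] => e ∈ M
  | e :: f :: rest => e ∈ M ∧ f ∉ M ∧ IsAltEdgeList M rest

/-- A pair of vertices is maximally matchable if they are joined by a path that is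
alternating with respect to some maximum matching. -/
def MaxMatchable {V : Type*} (G : SimpleGraph V) (u v : V) : Prop :=
  ∃ (p : G.Walk u v) (M : Finset (Sym2 V)),
    p.IsPath ∧ IsMaxMatching G M ∧ IsAltEdgeList (↑M) p.edges

/-- `G` is a star: some center `c` is adjacent to exactly the other vertices,
and there are no other edges. -/
def IsStar {V : Type*} (G : SimpleGraph V) : Prop :=
  ∃ c : V, ∀ u v : V, G.Adj u v ↔ ((u = c ∧ v ≠ c) ∨ (v = c ∧ u ≠ c))

/-- The class 𝕋: trees with at least one non-pendant vertex in which every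
non-pendant vertex is adjacent to a pendant vertex. -/
def InClassT {V : Type*} [Fintype V] (T : SimpleGraph V) [DecidableRel T.Adj] : Prop :=
  T.IsTree ∧ (∃ v, T.degree v ≠ 1) ∧
    ∀ v, T.degree v ≠ 1 → ∃ u, T.Adj v u ∧ T.degree u = 1

/-- The number of pendant neighbours of `v`. -/
def pendantNbrs {V : Type*} [Fintype V] [DecidableEq V] (T : SimpleGraph V)
    [DecidableRel T.Adj] (v : V) : ℕ :=
  ((T.neighborFinset v).filter fun u => T.degree u = 1).card

/-!
If `A` and `A#` have the same pattern, `T` has no path `i - k - l - j` on four vertices: since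
paths in a tree are unique, `(A A# A) i j` reduces to the single product `A i k * A# k l * A l j`,
which is nonzero, while it equals `A i j = 0`. A tree without such a path is a star.
Conversely, a matrix supported on a star with center `c` satisfies `A³ = s A` with
`s = (A²) c c`; multiplying by `A#²` gives `A = s A#`, and then `A = 0 = A#` if `s = 0`.
-/

namespace SimpleGraph

variable {V : Type*} {G : SimpleGraph V}

/-- `i ≠ k`, `k ≠ l` and `l ≠ j` are implied by irreflexivity of `Adj`. -/
def P4Free (G : SimpleGraph V) : Prop :=
  ∀ ⦃i k l j : V⦄, G.Adj i k → G.Adj k l → G.Adj l j → i ≠ l → k ≠ j → i ≠ j → False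

lemma IsAcyclic.not_adj_of_adj_adj (hG : G.IsAcyclic) {u v w : V} (huv : G.Adj u v)
    (hvw : G.Adj v w) : ¬G.Adj u w := by
  classical
  intro huw
  exact hG.cliqueFree le_rfl {u, v, w} (is3Clique_triple_iff.2 ⟨huv, huw, hvw⟩)

lemma isStar_of_forall_adj {c : V} (hG : G.IsAcyclic) (hc : ∀ v, v ≠ c → G.Adj c v) :
    IsStar G := by
  refine ⟨c, fun u v => ⟨fun huv => ?_, ?_⟩⟩
  · by_cases hu : u = c
    · exact .inl ⟨hu, hu ▸ huv.ne'⟩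
    · by_cases hv : v = c
      · exact .inr ⟨hv, hu⟩
      · exact (hG.not_adj_of_adj_adj (hc u hu) huv (hc v hv)).elim
  · rintro (⟨rfl, hv⟩ | ⟨rfl, hu⟩)
    · exact hc v hv
    · exact (hc u hu).symm

lemma Connected.exists_adj_adj_not_adj (hG : G.Connected) {c v : V} (hvc : v ≠ c)
    (hcv : ¬G.Adj c v) : ∃ x y, G.Adj c x ∧ G.Adj x y ∧ y ≠ c ∧ ¬G.Adj c y := by
  obtain ⟨p⟩ := hG.preconnected c v
  obtain ⟨d, -, hx, hy⟩ := p.exists_boundary_dart {w | w = c ∨ G.Adj c w} (.inl rfl)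
    (by simp [hvc, hcv])
  simp only [Set.mem_ofPred_eq, not_or] at hx hy
  rcases hx with hx | hx
  · exact (hy.2 (hx ▸ d.adj)).elim
  · exact ⟨d.fst, d.snd, hx, d.adj, hy.1, hy.2⟩

lemma P4Free.forall_adj (hP : G.P4Free) (hG : G.Connected) {c a b : V} (hca : G.Adj c a)
    (hcb : G.Adj c b) (hab : a ≠ b) : ∀ v, v ≠ c → G.Adj c v := by
  intro v hvc
  by_contra hcv
  obtain ⟨x, y, hcx, hxy, hyc, hcy⟩ := hG.exists_adj_adj_not_adj hvc hcv
  have hne : ∀ z, G.Adj c z → z ≠ y := fun z hcz hzy => hcy (hzy ▸ hcz)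
  by_cases hax : a = x
  · exact hP hcb.symm hcx hxy (fun h => hab (hax.trans h.symm)) hyc.symm (hne b hcb)
  · exact hP hca.symm hcx hxy hax hyc.symm (hne a hca)

lemma IsTree.isStar_of_p4Free (hT : G.IsTree) (hP : G.P4Free) : IsStar G := by
  obtain ⟨c⟩ := hT.connected.nonempty
  by_cases hc : ∀ v, v ≠ c → G.Adj c v
  · exact isStar_of_forall_adj hT.isAcyclic hc
  push Not at hc
  obtain ⟨v, hvc, hcv⟩ := hc
  obtain ⟨x, y, hcx, hxy, hyc, -⟩ := hT.connected.exists_adj_adj_not_adj hvc hcv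
  exact isStar_of_forall_adj hT.isAcyclic (hP.forall_adj hT.connected hcx.symm hxy hyc.symm)

lemma isPath_cons_cons_cons {i k l j : V} (hik : G.Adj i k) (hkl : G.Adj k l) (hlj : G.Adj l j)
    (hil : i ≠ l) (hkj : k ≠ j) (hij : i ≠ j) :
    (Walk.cons hik (Walk.cons hkl (Walk.cons hlj Walk.nil))).IsPath := by
  simp [Walk.cons_isPath_iff, hik.ne, hkl.ne, hlj.ne, hil, hkj, hij]

lemma IsAcyclic.not_adj_of_adj_adj_adj (hG : G.IsAcyclic) {i k l j : V} (hik : G.Adj i k)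
    (hkl : G.Adj k l) (hlj : G.Adj l j) (hil : i ≠ l) (hkj : k ≠ j) (hij : i ≠ j) :
    ¬G.Adj i j := fun h => by
  have := (hG.subsingleton_path i j).elim
    ⟨_, isPath_cons_cons_cons hik hkl hlj hil hkj hij⟩ (Path.singleton h)
  simpa using congrArg (fun p : G.Path i j => p.1.length) this

lemma IsAcyclic.eq_of_adj_adj_adj (hG : G.IsAcyclic) {i k l j k' l' : V} (hik : G.Adj i k)
    (hkl : G.Adj k l) (hlj : G.Adj l j) (hil : i ≠ l) (hkj : k ≠ j) (hij : i ≠ j)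
    (hik' : G.Adj i k') (hkl' : G.Adj k' l') (hlj' : G.Adj l' j) : k' = k ∧ l' = l := by
  have hnij := hG.not_adj_of_adj_adj_adj hik hkl hlj hil hkj hij
  have := (hG.subsingleton_path i j).elim
    ⟨_, isPath_cons_cons_cons hik' hkl' hlj' (fun h => hnij (h ▸ hlj'))
      (fun h => hnij (h ▸ hik')) hij⟩
    ⟨_, isPath_cons_cons_cons hik hkl hlj hil hkj hij⟩
  simpa using congrArg (fun p : G.Path i j => p.1.support) this

end SimpleGraph

namespace Matrix

variable {l m n o R : Type*} [Fintype m] [Fintype n] [NonUnitalNonAssocSemiring R]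

lemma mul_mul_apply_eq_of_unique (A : Matrix l m R) (B : Matrix m n R) (C : Matrix n o R)
    {i : l} {j : o} {k : m} {k' : n}
    (h : ∀ a b, A i a * B a b * C b j ≠ 0 → a = k ∧ b = k') :
    (A * B * C) i j = A i k * B k k' * C k' j := by
  simp only [mul_apply, Finset.sum_mul]
  rw [Finset.sum_comm, ← Fintype.sum_prod_type', Fintype.sum_eq_single (k, k')]
  rintro ⟨a, b⟩ hab
  by_contra hne
  exact hab (Prod.ext_iff.2 (h a b hne))

end Matrix

lemma p4Free_of_same_pattern {V : Type*} [Fintype V] {T : SimpleGraph V} (hT : T.IsAcyclic)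
    {A X : Matrix V V ℝ} (hw : ∀ i j, A i j ≠ 0 ↔ T.Adj i j) (hX : IsGroupInverse A X)
    (hpat : ∀ i j, A i j ≠ 0 ↔ X i j ≠ 0) : T.P4Free := by
  intro i k l j hik hkl hlj hil hkj hij
  have huniq : ∀ a b, A i a * X a b * A b j ≠ 0 → a = k ∧ b = l := fun a b h =>
    hT.eq_of_adj_adj_adj hik hkl hlj hil hkj hij
      ((hw i a).1 (left_ne_zero_of_mul (left_ne_zero_of_mul h)))
      ((hw a b).1 ((hpat a b).2 (right_ne_zero_of_mul (left_ne_zero_of_mul h))))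
      ((hw b j).1 (right_ne_zero_of_mul h))
  have hpath : A i k * X k l * A l j ≠ 0 :=
    mul_ne_zero (mul_ne_zero ((hw i k).2 hik) ((hpat k l).1 ((hw k l).2 hkl))) ((hw l j).2 hlj)
  apply hT.not_adj_of_adj_adj_adj hik hkl hlj hil hkj hij
  rwa [← hw, ← hX.1, Matrix.mul_mul_apply_eq_of_unique A X A huniq]

section GroupInverse

variable {n : Type*} [Fintype n] {A X : Matrix n n ℝ}

lemma IsGroupInverse.mul_mul_self (hX : IsGroupInverse A X) : A * X * X = X := by
  rw [hX.2.2, hX.2.1]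

lemma IsGroupInverse.cube_mul_mul (hX : IsGroupInverse A X) : A * A * A * X * X = A := by
  obtain ⟨h1, -, h3⟩ := hX
  calc A * A * A * X * X = A * A * (X * A) * X := by rw [← h3]; simp only [Matrix.mul_assoc]
    _ = A * (A * X * A) * X := by simp only [Matrix.mul_assoc]
    _ = A := by rw [h1, Matrix.mul_assoc, h3, ← Matrix.mul_assoc, h1]

lemma IsGroupInverse.eq_smul_of_cube_eq_smul (hX : IsGroupInverse A X) {s : ℝ}
    (hA : A * A * A = s • A) : A = s • X := by
  rw [← hX.cube_mul_mul, hA, Matrix.smul_mul, Matrix.smul_mul, hX.mul_mul_self]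

lemma IsGroupInverse.ne_zero_iff_of_eq_smul (hX : IsGroupInverse A X) {s : ℝ} (hA : A = s • X)
    (i j : n) : A i j ≠ 0 ↔ X i j ≠ 0 := by
  rcases eq_or_ne s 0 with rfl | hs
  · have hA0 : A = 0 := by simpa using hA
    have hX0 : X = 0 := by rw [← hX.2.1, hA0, Matrix.mul_zero, Matrix.zero_mul]
    simp [hA0, hX0]
  · simp [hA, hs]

end GroupInverse

lemma Matrix.cube_eq_smul_of_star_support {n R : Type*} [Fintype n] [CommSemiring R]
    {A : Matrix n n R} {c : n} (hA : ∀ p q, (p = c ↔ q = c) → A p q = 0) :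
    A * A * A = (A * A) c c • A := by
  have hrow : ∀ i, i ≠ c → ∀ (M : Matrix n n R) j, (A * M) i j = A i c * M c j := fun i hi M j =>
    (mul_apply ..).trans <| Fintype.sum_eq_single c fun k hk => by
      rw [hA i k (iff_of_false hi hk), zero_mul]
  have hsq : ∀ j, j ≠ c → (A * A) c j = 0 := fun j hj => by
    refine (mul_apply ..).trans <| Finset.sum_eq_zero fun k _ => ?_
    by_cases hk : k = c
    · rw [hk, hA c c Iff.rfl, zero_mul]
    · rw [hA k j (iff_of_false hk hj), mul_zero]
  ext i j
  rw [smul_apply, smul_eq_mul]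
  by_cases hi : i = c
  · subst hi
    exact (mul_apply ..).trans <| Fintype.sum_eq_single i fun k hk => by rw [hsq k hk, zero_mul]
  · rw [Matrix.mul_assoc, hrow i hi]
    by_cases hj : j = c
    · rw [hj, mul_comm]
    · rw [hsq j hj, hA i j (iff_of_false hi hj), mul_zero, mul_zero]

theorem same_pattern_iff_star {V : Type*} [Fintype V]
    (T : SimpleGraph V) (hT : T.IsTree)
    (A X : Matrix V V ℝ)
    (hw : ∀ i j, A i j ≠ 0 ↔ T.Adj i j)
    (hX : IsGroupInverse A X) :
    (∀ i j, A i j ≠ 0 ↔ X i j ≠ 0) ↔ IsStar T := by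
  refine ⟨fun hpat => hT.isStar_of_p4Free (p4Free_of_same_pattern hT.isAcyclic hw hX hpat), ?_⟩
  rintro ⟨c, hc⟩
  have hA : ∀ p q, (p = c ↔ q = c) → A p q = 0 := fun p q hpq =>
    not_not.1 fun h => by have := (hc p q).1 ((hw p q).1 h); tauto
  exact hX.ne_zero_iff_of_eq_smul
    (hX.eq_smul_of_cube_eq_smul (Matrix.cube_eq_smul_of_star_support hA))
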